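/- The set B_⋈ := (−10,10)×(−1,1)×(−2,0) ∪ (−1,1)×(−10,10)×(0,2) ∪ (−1,1)×(−1,1)×{0} ⊆ ℝ³ (two crossing beams) is regular in the sense of Gröger with volume-preserving charts: for every boundary point x of B_⋈ there exists an open neighborhood Υ_x and a volume-preserving bi-Lipschitz map φ_x: Υ_x → ℝ³ with φ_x(x)=0 such that φ_x(B_⋈ ∩ Υ_x) equals αK_- for some α > 0 (where K_- is the lower half of the unit cube). -/

import Mathlib

open MeasureTheory Set Pointwise

noncomputable section

/-- The two crossing beams in `ℝ³`: `(−10,10)×(−1,1)×(−2,0) ∪ (−1,1)×(−10,10)×(0,2)`,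
glued along the open square `(−1,1)×(−1,1)×{0}`. -/
def crossingBeams : Set (EuclideanSpace ℝ (Fin 3)) :=
  {x | x 0 ∈ Ioo (-10 : ℝ) 10 ∧ x 1 ∈ Ioo (-1 : ℝ) 1 ∧ x 2 ∈ Ioo (-2 : ℝ) 0} ∪
  {x | x 0 ∈ Ioo (-1 : ℝ) 1 ∧ x 1 ∈ Ioo (-10 : ℝ) 10 ∧ x 2 ∈ Ioo (0 : ℝ) 2} ∪
  {x | x 0 ∈ Ioo (-1 : ℝ) 1 ∧ x 1 ∈ Ioo (-1 : ℝ) 1 ∧ x 2 = 0}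

/-- The lower half of the (open) unit cube of `ℝ³`. -/
def lowerHalfUnitCube : Set (EuclideanSpace ℝ (Fin 3)) :=
  {x | ∀ i, |x i| < 1} ∩ {x | x 2 < 0}

/-!
Near a boundary point `x`, `B_⋈` coincides with a translate of one of a few model sets, possibly
after a symmetry of `B_⋈`. Away from the square `[-1, 1]² × {0}`, `B_⋈` is locally one of the two
beams, an open box, whose germ at `x` is an orthant. On the boundary of that square it is either
the three-quarter space `{a < 1 ∨ c < 0}` (reentrant edges) or, at the corners `(±1, ±1, 0)`, a
union of three quarter spaces. Each model is the preimage of the half-space `{c < 0}` under a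
composition of signed coordinate permutations, a shear and the fold
`(a, b, c) ↦ (a - c, b, min a c)`. The fold is a transvection followed by the shear
`(u, b, c) ↦ (u, b, c + min u 0)`, which is a transvection on `{u ≤ 0}` and the identity on
`{u > 0}`; so all these maps are volume-preserving and bi-Lipschitz. The chart is then the model
map restricted to the preimage of a small cube around `0`.
-/

open Filter Topology
open scoped NNReal

local notation "ℝ³" => EuclideanSpace ℝ (Fin 3)

theorem MeasureTheory.MeasurePreserving.piecewise {α β : Type*} [MeasurableSpace α]
    [MeasurableSpace β] {μ : Measure α} {ν : Measure β} {f₁ f₂ : α → β} {S : Set α} {T : Set β}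
    [DecidablePred (· ∈ S)] (hS : MeasurableSet S) (hT : MeasurableSet T)
    (h₁ : MeasurePreserving f₁ μ ν) (h₂ : MeasurePreserving f₂ μ ν)
    (hf₁ : f₁ ⁻¹' T = S) (hf₂ : f₂ ⁻¹' T = S) : MeasurePreserving (S.piecewise f₁ f₂) μ ν := by
  have hmeas : Measurable (S.piecewise f₁ f₂) := h₁.measurable.piecewise hS h₂.measurable
  refine ⟨hmeas, Measure.ext fun s hs => ?_⟩
  have hpre : S.piecewise f₁ f₂ ⁻¹' s = f₁ ⁻¹' (s ∩ T) ∪ f₂ ⁻¹' (s \ T) := by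
    ext p
    by_cases hp : p ∈ S
    · have h₁T : f₁ p ∈ T := by rwa [← mem_preimage, hf₁]
      have h₂T : f₂ p ∈ T := by rwa [← mem_preimage, hf₂]
      simp [hp, h₁T, h₂T]
    · have h₁T : f₁ p ∉ T := by rwa [← mem_preimage, hf₁]
      have h₂T : f₂ p ∉ T := by rwa [← mem_preimage, hf₂]
      simp [hp, h₁T, h₂T]
  have hdisj : Disjoint (f₁ ⁻¹' (s ∩ T)) (f₂ ⁻¹' (s \ T)) := by
    rw [preimage_inter, preimage_sdiff, hf₁, hf₂]
    exact disjoint_sdiff_right.mono_left inter_subset_right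
  rw [Measure.map_apply hmeas hs, hpre, measure_union hdisj (h₂.measurable (hs.diff hT)),
    h₁.measure_preimage (hs.inter hT).nullMeasurableSet,
    h₂.measure_preimage (hs.diff hT).nullMeasurableSet, measure_inter_add_sdiff s hT]

section Shear

variable {E : Type*} [NormedAddCommGroup E] [NormedSpace ℝ E] (ℓ : E →L[ℝ] ℝ) {v : E}

theorem lipschitzWith_add_comp_smul {g : ℝ → ℝ} {K : ℝ≥0} (hg : LipschitzWith K g) :
    LipschitzWith (1 + K * ‖ℓ‖₊ * ‖v‖₊) (fun p => p + g (ℓ p) • v) := by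
  refine LipschitzWith.id.add (LipschitzWith.of_dist_le_mul fun p q => ?_)
  calc dist (g (ℓ p) • v) (g (ℓ q) • v) = dist (g (ℓ p)) (g (ℓ q)) * ‖v‖ := by
        rw [dist_eq_norm, ← sub_smul, norm_smul, ← dist_eq_norm]
    _ ≤ K * (‖ℓ‖ * dist p q) * ‖v‖ := by
        gcongr
        exact (hg.dist_le_mul _ _).trans (by gcongr; exact ℓ.lipschitz.dist_le_mul p q)
    _ = _ := by push_cast; ring

variable [MeasureSpace E] [BorelSpace E] [FiniteDimensional ℝ E]
  [(volume : Measure E).IsAddHaarMeasure]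

theorem measurePreserving_add_smul (hv : ℓ v = 0) :
    MeasurePreserving (fun p => p + ℓ p • v) volume volume := by
  let T := LinearEquiv.transvection (f := (ℓ : E →ₗ[ℝ] ℝ)) hv
  have hdet : LinearMap.det (T : E →ₗ[ℝ] E) = 1 := by
    rw [← LinearEquiv.coe_det, LinearEquiv.transvection.det_eq_one, Units.val_one]
  refine ⟨(T : E →ₗ[ℝ] E).continuous_of_finiteDimensional.measurable, ?_⟩
  rw [show (fun p => p + ℓ p • v) = (T : E →ₗ[ℝ] E) from rfl,
    Measure.map_linearMap_addHaar_eq_smul_addHaar _ (by rw [hdet]; exact one_ne_zero), hdet]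
  simp

theorem measurePreserving_add_min_smul (hv : ℓ v = 0) :
    MeasurePreserving (fun p => p + min (ℓ p) 0 • v) volume volume := by
  classical
  -- a transvection on `{ℓ ≤ 0}`, the identity elsewhere; both preserve `ℓ`
  let S : Set E := {p | ℓ p ≤ 0}
  have hS : MeasurableSet S := measurableSet_le ℓ.continuous.measurable measurable_const
  have key := (measurePreserving_add_smul ℓ hv).piecewise (f₂ := id) hS hS
    (MeasurePreserving.id volume) (by ext p; simp [S, hv]) rfl
  convert key using 1
  ext p : 1
  by_cases hp : ℓ p ≤ 0
  · simp [S, hp]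
  · simp [S, hp, min_eq_right (le_of_not_ge hp)]

end Shear

/-- Volume preservation is required of the inverse: that is what `volume (φ '' s) = volume s`
amounts to. -/
structure VolBiLipEquiv (E : Type*) [PseudoEMetricSpace E] [MeasureSpace E] extends E ≃ E where
  exists_lipschitz : ∃ K : ℝ≥0, LipschitzWith K toFun ∧ LipschitzWith K invFun
  measurePreserving_invFun : MeasurePreserving invFun volume volume

namespace VolBiLipEquiv

section General

variable {E : Type*} [PseudoEMetricSpace E] [MeasureSpace E]

instance : EquivLike (VolBiLipEquiv E) E E where
  coe h := h.toFun
  inv h := h.invFun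
  left_inv h := h.left_inv
  right_inv h := h.right_inv
  coe_injective' := by
    intro f g hfg _
    cases f
    cases g
    congr
    exact DFunLike.coe_injective hfg

variable (h : VolBiLipEquiv E)

@[simp] theorem symm_apply_apply (p : E) : h.toEquiv.symm (h p) = p := h.left_inv p

@[simp] theorem apply_symm_apply (p : E) : h (h.toEquiv.symm p) = p := h.right_inv p

theorem continuous : Continuous h :=
  h.exists_lipschitz.choose_spec.1.continuous

theorem continuous_symm : Continuous h.toEquiv.symm :=
  h.exists_lipschitz.choose_spec.2.continuous

theorem volume_image {s : Set E} (hs : MeasurableSet s) : volume (h '' s) = volume s := by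
  rw [show h '' s = h.invFun ⁻¹' s from h.toEquiv.image_eq_preimage_symm s,
    h.measurePreserving_invFun.measure_preimage hs.nullMeasurableSet]

def refl : VolBiLipEquiv E where
  toEquiv := Equiv.refl E
  exists_lipschitz := ⟨1, LipschitzWith.id, LipschitzWith.id⟩
  measurePreserving_invFun := MeasurePreserving.id volume

def trans (g h : VolBiLipEquiv E) : VolBiLipEquiv E where
  toEquiv := g.toEquiv.trans h.toEquiv
  exists_lipschitz := by
    obtain ⟨K, hK, hK'⟩ := g.exists_lipschitz
    obtain ⟨L, hL, hL'⟩ := h.exists_lipschitz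
    exact ⟨L * K, hL.comp hK, mul_comm K L ▸ hK'.comp hL'⟩
  measurePreserving_invFun := g.measurePreserving_invFun.comp h.measurePreserving_invFun

@[simp] theorem trans_apply (g h : VolBiLipEquiv E) (p : E) : g.trans h p = h (g p) := rfl

end General

def ofIsometryEquiv {E : Type*} [MetricSpace E] [MeasureSpace E] (f : E ≃ᵢ E)
    (hf : MeasurePreserving f.symm volume volume) : VolBiLipEquiv E where
  toEquiv := f.toEquiv
  exists_lipschitz := ⟨1, f.isometry.lipschitz, f.symm.isometry.lipschitz⟩
  measurePreserving_invFun := hf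

def addRight {E : Type*} [NormedAddCommGroup E] [MeasureSpace E] [MeasurableAdd E]
    [(volume : Measure E).IsAddRightInvariant] (v : E) : VolBiLipEquiv E :=
  ofIsometryEquiv (IsometryEquiv.addRight v) (measurePreserving_add_right volume (-v))

@[simp] theorem addRight_apply {E : Type*} [NormedAddCommGroup E] [MeasureSpace E]
    [MeasurableAdd E] [(volume : Measure E).IsAddRightInvariant] (v p : E) :
    addRight v p = p + v :=
  rfl

section LinearIsometry

variable {E : Type*} [NormedAddCommGroup E] [InnerProductSpace ℝ E] [FiniteDimensional ℝ E]
  [MeasurableSpace E] [BorelSpace E]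

def ofLinearIsometryEquiv (f : E ≃ₗᵢ[ℝ] E) : VolBiLipEquiv E :=
  ofIsometryEquiv f.toIsometryEquiv f.symm.measurePreserving

@[simp] theorem ofLinearIsometryEquiv_apply (f : E ≃ₗᵢ[ℝ] E) (p : E) :
    ofLinearIsometryEquiv f p = f p :=
  rfl

end LinearIsometry

section Shear

variable {E : Type*} [NormedAddCommGroup E] [NormedSpace ℝ E] [MeasureSpace E] [BorelSpace E]
  [FiniteDimensional ℝ E] [(volume : Measure E).IsAddHaarMeasure] (ℓ : E →L[ℝ] ℝ) {v : E}

def shear (hv : ℓ v = 0) {g : ℝ → ℝ} {K : ℝ≥0} (hg : LipschitzWith K g)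
    (hg' : MeasurePreserving (fun p => p + g (ℓ p) • -v) volume volume) : VolBiLipEquiv E where
  toFun p := p + g (ℓ p) • v
  invFun p := p + g (ℓ p) • -v
  left_inv p := by simp [hv]
  right_inv p := by simp [hv]
  exists_lipschitz := ⟨_, lipschitzWith_add_comp_smul ℓ hg,
    by simpa using lipschitzWith_add_comp_smul ℓ (v := -v) hg⟩
  measurePreserving_invFun := hg'

def transvection (hv : ℓ v = 0) : VolBiLipEquiv E :=
  shear ℓ hv LipschitzWith.id (measurePreserving_add_smul ℓ (by simp [hv]))

def shearMin (hv : ℓ v = 0) : VolBiLipEquiv E :=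
  shear ℓ hv (LipschitzWith.id.min_const 0) (measurePreserving_add_min_smul ℓ (by simp [hv]))

@[simp] theorem transvection_apply (hv : ℓ v = 0) (p : E) :
    transvection ℓ hv p = p + ℓ p • v :=
  rfl

@[simp] theorem shearMin_apply (hv : ℓ v = 0) (p : E) :
    shearMin ℓ hv p = p + min (ℓ p) 0 • v :=
  rfl

end Shear

section Coordinates

variable {ι : Type*} [Fintype ι] [DecidableEq ι]

def swapCoords (i j : ι) : VolBiLipEquiv (EuclideanSpace ℝ ι) :=
  ofLinearIsometryEquiv (LinearIsometryEquiv.piLpCongrLeft 2 ℝ ℝ (Equiv.swap i j))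

@[simp] theorem swapCoords_apply (i j k : ι) (p : EuclideanSpace ℝ ι) :
    swapCoords i j p k = p (if k = i then j else if k = j then i else k) := by
  simp [swapCoords, LinearIsometryEquiv.piLpCongrLeft_apply, Equiv.piCongrLeft'_apply,
    Equiv.swap_apply_def]

@[simp] theorem swapCoords_zero (i j : ι) : swapCoords i j 0 = 0 := by
  ext k; simp

def reflect (S : Finset ι) : VolBiLipEquiv (EuclideanSpace ℝ ι) :=
  ofLinearIsometryEquiv (LinearIsometryEquiv.piLpCongrRight 2 fun i =>
    if i ∈ S then LinearIsometryEquiv.neg ℝ else LinearIsometryEquiv.refl ℝ ℝ)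

@[simp] theorem reflect_apply (S : Finset ι) (p : EuclideanSpace ℝ ι) (i : ι) :
    reflect S p i = if i ∈ S then -p i else p i := by
  by_cases hi : i ∈ S <;> simp [reflect, hi]

@[simp] theorem reflect_zero (S : Finset ι) : reflect S 0 = 0 := by
  ext i; simp

end Coordinates

open EuclideanSpace

def shear₀₂ : VolBiLipEquiv ℝ³ := transvection (proj 2) (v := -single 0 1) (by simp)

@[simp] theorem shear₀₂_apply (p : ℝ³) (i : Fin 3) :
    shear₀₂ p i = if i = 0 then p 0 - p 2 else p i := by
  fin_cases i <;> simp [shear₀₂, sub_eq_add_neg]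

@[simp] theorem shear₀₂_zero : shear₀₂ 0 = 0 := by ext i; simp

def fold : VolBiLipEquiv ℝ³ :=
  shear₀₂.trans (shearMin (proj 0) (v := single 2 1) (by simp))

@[simp] theorem fold_apply (p : ℝ³) (i : Fin 3) :
    fold p i = if i = 0 then p 0 - p 2 else if i = 1 then p 1 else min (p 0) (p 2) := by
  fin_cases i <;> simp [fold]
  rw [add_comm, ← min_add_add_right, sub_add_cancel, zero_add]

@[simp] theorem fold_zero : fold 0 = 0 := by ext i; simp

def exchangeBeams : VolBiLipEquiv ℝ³ := (swapCoords 0 1).trans (reflect {2})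

@[simp] theorem exchangeBeams_apply (p : ℝ³) (i : Fin 3) :
    exchangeBeams p i = if i = 0 then p 1 else if i = 1 then p 0 else -p 2 := by
  fin_cases i <;> simp [exchangeBeams]

end VolBiLipEquiv

open VolBiLipEquiv

section Cube

variable {ι : Type*} [Fintype ι]

theorem isOpen_cube (r : ℝ) : IsOpen {q : EuclideanSpace ℝ ι | ∀ i, |q i| < r} := by
  simp only [ofPred_forall]
  exact isOpen_iInter_of_finite fun i =>
    isOpen_lt (continuous_abs.comp (PiLp.continuous_apply 2 _ i)) continuous_const

theorem exists_cube_subset {V : Set (EuclideanSpace ℝ ι)} (hV : V ∈ 𝓝 0) :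
    ∃ r > 0, {q : EuclideanSpace ℝ ι | ∀ i, |q i| < r} ⊆ V := by
  have : WithLp.toLp 2 ⁻¹' V ∈ 𝓝 (0 : ι → ℝ) :=
    (PiLp.continuous_toLp 2 _).continuousAt.preimage_mem_nhds (by simpa using hV)
  obtain ⟨r, hr, hball⟩ := Metric.mem_nhds_iff.mp this
  refine ⟨r, hr, fun q hq => hball ?_⟩
  simpa [mem_ball_zero_iff, pi_norm_lt_iff hr] using hq

end Cube

theorem smul_lowerHalfUnitCube {r : ℝ} (hr : 0 < r) :
    r • lowerHalfUnitCube = {q : ℝ³ | ∀ i, |q i| < r} ∩ {q | q 2 < 0} := by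
  ext q
  simp [mem_smul_set_iff_inv_smul_mem₀ hr.ne', lowerHalfUnitCube, abs_mul, abs_of_pos hr,
    inv_mul_lt_iff₀ hr]

def HasHalfSpaceChartAt (Ω : Set ℝ³) (x : ℝ³) : Prop :=
  ∃ φ : VolBiLipEquiv ℝ³, φ x = 0 ∧ Ω =ᶠ[𝓝 x] φ ⁻¹' {q | q 2 < 0}

namespace HasHalfSpaceChartAt

variable {Ω Ω' : Set ℝ³} {x : ℝ³}

theorem congr (h : HasHalfSpaceChartAt Ω x) (hΩ : Ω' =ᶠ[𝓝 x] Ω) : HasHalfSpaceChartAt Ω' x :=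
  let ⟨φ, hφx, hφ⟩ := h
  ⟨φ, hφx, hΩ.trans hφ⟩

theorem preimage {y : ℝ³} (h : HasHalfSpaceChartAt Ω y) (g : VolBiLipEquiv ℝ³) (hg : g x = y) :
    HasHalfSpaceChartAt (g ⁻¹' Ω) x := by
  obtain ⟨φ, hφy, hφ⟩ := h
  refine ⟨g.trans φ, by simp [hg, hφy], ?_⟩
  exact hφ.comp_tendsto (hg ▸ g.continuous.tendsto x)

theorem of_symmetry (g : VolBiLipEquiv ℝ³) (hg : g ⁻¹' Ω = Ω) (h : HasHalfSpaceChartAt Ω (g x)) :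
    HasHalfSpaceChartAt Ω x :=
  hg ▸ h.preimage g rfl

theorem exists_groeger_chart (h : HasHalfSpaceChartAt Ω x) :
    ∃ (Υ : Set ℝ³) (φ : ℝ³ → ℝ³) (K : ℝ≥0) (α : ℝ),
      0 < α ∧ IsOpen Υ ∧ x ∈ Υ ∧
      LipschitzOnWith K φ Υ ∧ AntilipschitzWith K (Υ.domRestrict φ) ∧
      φ x = 0 ∧
      (∀ s : Set ℝ³, s ⊆ Υ → MeasurableSet s → volume (φ '' s) = volume s) ∧
      φ '' (Ω ∩ Υ) = α • lowerHalfUnitCube := by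
  obtain ⟨φ, hφx, hΩ⟩ := h
  obtain ⟨K, hK, hK'⟩ := φ.exists_lipschitz
  have hU : φ.toEquiv.symm ⁻¹' {p | p ∈ Ω ↔ p ∈ φ ⁻¹' {q | q 2 < 0}} ∈ 𝓝 0 := by
    have hφ0 : φ.toEquiv.symm 0 = x := by rw [← hφx, φ.symm_apply_apply]
    exact φ.continuous_symm.continuousAt.preimage_mem_nhds (hφ0 ▸ eventuallyEq_set.mp hΩ)
  obtain ⟨r, hr, hcube⟩ := exists_cube_subset hU
  refine ⟨φ ⁻¹' {q | ∀ i, |q i| < r}, φ, K, r, hr, (isOpen_cube r).preimage φ.continuous,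
    by simp [hφx, hr], hK.lipschitzOnWith, (hK'.to_rightInverse φ.left_inv).domRestrict _, hφx,
    fun s _ hs => φ.volume_image hs, ?_⟩
  rw [smul_lowerHalfUnitCube hr]
  ext q
  constructor
  · rintro ⟨p, ⟨hpΩ, hp⟩, rfl⟩
    have hp' : p ∈ Ω ↔ (φ p) 2 < 0 := by simpa using hcube hp
    exact ⟨hp, hp'.mp hpΩ⟩
  · rintro ⟨hq, hq₂⟩
    have hq' : φ.toEquiv.symm q ∈ Ω ↔ q 2 < 0 := by simpa using hcube hq
    exact ⟨φ.toEquiv.symm q, ⟨hq'.mpr hq₂, by simpa using hq⟩, by simp⟩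

theorem lowerHalfSpace : HasHalfSpaceChartAt {q | q 2 < 0} 0 :=
  ⟨refl, rfl, .rfl⟩

theorem reentrant : HasHalfSpaceChartAt {q | q 0 < 0 ∨ q 2 < 0} 0 :=
  (lowerHalfSpace.preimage fold fold_zero).congr (.of_eq (Set.ext fun q => by simp))

-- `{a < 0 ∧ c < 0} = -{0 < min a c}`, and `min a c` is the last coordinate of the fold
theorem quarter : HasHalfSpaceChartAt {q | q 0 < 0 ∧ q 2 < 0} 0 :=
  (((lowerHalfSpace.preimage (reflect .univ) (reflect_zero _)).preimage fold fold_zero).preimage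
    (reflect .univ) (reflect_zero _)).congr (.of_eq (Set.ext fun q => by simp))

-- negating and then folding turns the octant into `{0 < b ∧ 0 < c}`
theorem octant : HasHalfSpaceChartAt {q | q 0 < 0 ∧ q 1 < 0 ∧ q 2 < 0} 0 :=
  ((((quarter.preimage (swapCoords 0 1) (swapCoords_zero _ _)).preimage (reflect .univ)
    (reflect_zero _)).preimage fold fold_zero).preimage (reflect .univ) (reflect_zero _)).congr
    (.of_eq (Set.ext fun q => by simp; tauto))

/-- The fold turns this set into `{m < 0 ∧ (u - m < 0 ∨ b < 0)}` in the coordinates `(u, b, m)`;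
`shear₀₂` replaces `u - m` by `u`, and a second fold, in the coordinates `(u, b)`, leaves the
quarter space `{m < 0 ∧ min u b < 0}`. -/
theorem crossing :
    HasHalfSpaceChartAt {q | (q 1 < 0 ∧ q 2 < 0) ∨ (q 0 < 0 ∧ 0 < q 2) ∨ (q 0 < 0 ∧ q 1 < 0)} 0 :=
  (((((quarter.preimage (swapCoords 0 1) (swapCoords_zero _ _)).preimage fold fold_zero).preimage
    (swapCoords 1 2) (swapCoords_zero _ _)).preimage shear₀₂ shear₀₂_zero).preimage
    fold fold_zero).congr (.of_eq (Set.ext fun q => by simp; grind))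

end HasHalfSpaceChartAt

def orthant (A : Finset (Fin 3)) : Set ℝ³ := {q | ∀ i ∈ A, q i < 0}

theorem HasHalfSpaceChartAt.orthant {A : Finset (Fin 3)} (hA : A.Nonempty) :
    HasHalfSpaceChartAt (orthant A) 0 := by
  -- `fin_cases` lists `A` as `∅, {0}, {1}, {0, 1}, {2}, {0, 2}, {1, 2}, univ`
  fin_cases A
  · simp at hA
  · exact (lowerHalfSpace.preimage (swapCoords 0 2) (swapCoords_zero _ _)).congr
      (.of_eq (Set.ext fun q => by simp [_root_.orthant]))
  · exact (lowerHalfSpace.preimage (swapCoords 1 2) (swapCoords_zero _ _)).congr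
      (.of_eq (Set.ext fun q => by simp [_root_.orthant]))
  · exact (quarter.preimage (swapCoords 1 2) (swapCoords_zero _ _)).congr
      (.of_eq (Set.ext fun q => by simp [_root_.orthant]))
  · exact lowerHalfSpace.congr (.of_eq (Set.ext fun q => by simp [_root_.orthant]))
  · exact quarter.congr (.of_eq (Set.ext fun q => by simp [_root_.orthant]))
  · exact (quarter.preimage (swapCoords 0 1) (swapCoords_zero _ _)).congr
      (.of_eq (Set.ext fun q => by simp [_root_.orthant]))
  · exact octant.congr (.of_eq (Set.ext fun q => by simp [_root_.orthant]))

theorem eventually_mem_Ioo_iff {a b t : ℝ} (hab : a < b) (ht : t ∈ Icc a b) :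
    ∀ᶠ s in 𝓝 t, s ∈ Ioo a b ↔ (t = a → a < s) ∧ (t = b → s < b) := by
  have ha : ∀ᶠ s in 𝓝 t, t ≠ a → a < s := by
    rcases eq_or_lt_of_le ht.1 with rfl | hat
    · simp
    · exact (eventually_gt_nhds hat).mono fun s hs _ => hs
  have hb : ∀ᶠ s in 𝓝 t, t ≠ b → s < b := by
    rcases eq_or_lt_of_le ht.2 with rfl | htb
    · simp
    · exact (eventually_lt_nhds htb).mono fun s hs _ => hs
  filter_upwards [ha, hb] with s hsa hsb
  grind

section Box

variable {ι : Type*}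

def openBox (a b : ι → ℝ) : Set (EuclideanSpace ℝ ι) := {p | ∀ i, p i ∈ Ioo (a i) (b i)}

def closedBox (a b : ι → ℝ) : Set (EuclideanSpace ℝ ι) := {p | ∀ i, p i ∈ Icc (a i) (b i)}

theorem isClosed_closedBox (a b : ι → ℝ) : IsClosed (closedBox a b) := by
  simp only [closedBox, ofPred_forall]
  exact isClosed_iInter fun i => isClosed_Icc.preimage (PiLp.continuous_apply 2 _ i)

theorem eventually_abs_coord_lt {x : EuclideanSpace ℝ ι} {i : ι} {r : ℝ} (hx : |x i| < r) :
    ∀ᶠ p in 𝓝 x, |p i| < r :=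
  ((continuous_abs.comp (PiLp.continuous_apply 2 _ i)).tendsto x).eventually_lt_const hx

theorem eventually_abs_coord_sub_lt (x : EuclideanSpace ℝ ι) (i : ι) {ε : ℝ} (hε : 0 < ε) :
    ∀ᶠ p in 𝓝 x, |p i - x i| < ε :=
  ((PiLp.continuous_apply 2 _ i).tendsto x).eventually
    (Metric.eventually_nhds_iff.mpr ⟨ε, hε, fun _ h => h⟩)

variable [Fintype ι]

theorem isOpen_openBox (a b : ι → ℝ) : IsOpen (openBox a b) := by
  simp only [openBox, ofPred_forall]
  exact isOpen_iInter_of_finite fun i => isOpen_Ioo.preimage (PiLp.continuous_apply 2 _ i)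

theorem openBox_eventuallyEq {a b : ι → ℝ} {x : EuclideanSpace ℝ ι} (hab : ∀ i, a i < b i)
    (hx : ∀ i, x i ∈ Icc (a i) (b i)) :
    openBox a b =ᶠ[𝓝 x] {p | ∀ i, (x i = a i → a i < p i) ∧ (x i = b i → p i < b i)} := by
  refine eventuallyEq_set.mpr ((eventually_all.mpr fun i => ?_).mono fun p hp => forall_congr' hp)
  exact ((PiLp.continuous_apply 2 _ i).tendsto x).eventually (eventually_mem_Ioo_iff (hab i) (hx i))

end Box

theorem HasHalfSpaceChartAt.openBox {a b : Fin 3 → ℝ} {x : ℝ³} (hab : ∀ i, a i < b i)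
    (hx : ∀ i, x i ∈ Icc (a i) (b i)) (hxB : x ∉ openBox a b) :
    HasHalfSpaceChartAt (openBox a b) x := by
  classical
  -- after translating `x` to `0` and reflecting the coordinates where `x` sits at the lower
  -- end, the germ of the box is the orthant of the coordinates where `x` sits at an end
  let S := Finset.univ.filter fun i => x i = a i
  let A := Finset.univ.filter fun i => x i = a i ∨ x i = b i
  have hA : A.Nonempty := by
    simp only [_root_.openBox, mem_ofPred_eq, not_forall] at hxB
    obtain ⟨i, hi⟩ := hxB
    exact ⟨i, by simp [A]; grind⟩
  refine ((orthant hA).preimage ((addRight (-x)).trans (reflect S)) (by simp)).congr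
    ((openBox_eventuallyEq hab hx).trans (.of_eq (Set.ext fun p => forall_congr' fun i => ?_)))
  have := hab i
  by_cases ha : x i = a i <;> by_cases hb : x i = b i <;> simp [S, A, ha, hb] <;> grind

theorem forall_fin_three {P : Fin 3 → Prop} : (∀ i, P i) ↔ P 0 ∧ P 1 ∧ P 2 :=
  ⟨fun h => ⟨h 0, h 1, h 2⟩, fun h i => by fin_cases i <;> simp [h.1, h.2.1, h.2.2]⟩

def lowerBeam : Set ℝ³ := openBox ![-10, -1, -2] ![10, 1, 0]

def upperBeam : Set ℝ³ := openBox ![-1, -10, 0] ![1, 10, 2]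

theorem crossingBeams_eq_union :
    crossingBeams = lowerBeam ∪ upperBeam ∪ openBox ![-1, -1, -2] ![1, 1, 2] := by
  ext p
  simp [crossingBeams, lowerBeam, upperBeam, openBox, forall_fin_three]
  grind (splits := 40)

theorem lowerBeam_subset_crossingBeams : lowerBeam ⊆ crossingBeams := by
  rw [crossingBeams_eq_union]; exact subset_union_left.trans subset_union_left

theorem upperBeam_subset_crossingBeams : upperBeam ⊆ crossingBeams := by
  rw [crossingBeams_eq_union]; exact subset_union_right.trans subset_union_left

theorem isOpen_crossingBeams : IsOpen crossingBeams := by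
  rw [crossingBeams_eq_union]
  exact ((isOpen_openBox _ _).union (isOpen_openBox _ _)).union (isOpen_openBox _ _)

theorem closure_crossingBeams_subset :
    closure crossingBeams ⊆
      closedBox ![-10, -1, -2] ![10, 1, 0] ∪ closedBox ![-1, -10, 0] ![1, 10, 2] := by
  refine closure_minimal (fun p hp => ?_) ((isClosed_closedBox _ _).union (isClosed_closedBox _ _))
  simp [crossingBeams, closedBox, forall_fin_three] at hp ⊢
  -- the coordinates `p i : (fun _ => ℝ) i` must be beta-reduced for `grind` to identify them
  beta_reduce at *
  grind (splits := 40)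

theorem crossingBeams_eventuallyEq_lowerBeam {x : ℝ³} (hx : x 2 < 0 ∨ 1 < |x 0|) :
    crossingBeams =ᶠ[𝓝 x] lowerBeam := by
  have hV : IsOpen {p : ℝ³ | p 2 < 0 ∨ 1 < |p 0|} :=
    (isOpen_lt (PiLp.continuous_apply 2 _ 2) continuous_const).union
      (isOpen_lt continuous_const (continuous_abs.comp (PiLp.continuous_apply 2 _ 0)))
  refine eventuallyEq_set.mpr ?_
  filter_upwards [hV.mem_nhds hx] with p hp
  clear hV
  simp [crossingBeams, lowerBeam, openBox, forall_fin_three, lt_abs] at hp ⊢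
  beta_reduce at hp ⊢
  grind

theorem crossingBeams_eventuallyEq_upperBeam {x : ℝ³} (hx : 0 < x 2 ∨ 1 < |x 1|) :
    crossingBeams =ᶠ[𝓝 x] upperBeam := by
  have hV : IsOpen {p : ℝ³ | 0 < p 2 ∨ 1 < |p 1|} :=
    (isOpen_lt continuous_const (PiLp.continuous_apply 2 _ 2)).union
      (isOpen_lt continuous_const (continuous_abs.comp (PiLp.continuous_apply 2 _ 1)))
  refine eventuallyEq_set.mpr ?_
  filter_upwards [hV.mem_nhds hx] with p hp
  clear hV
  simp [crossingBeams, upperBeam, openBox, forall_fin_three, lt_abs] at hp ⊢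
  beta_reduce at hp ⊢
  grind

theorem reflect_preimage_crossingBeams {i : Fin 3} (hi : i ≠ 2) :
    reflect {i} ⁻¹' crossingBeams = crossingBeams := by
  ext p
  fin_cases i
  all_goals simp [crossingBeams] at hi ⊢
  all_goals beta_reduce
  all_goals grind

theorem exchangeBeams_preimage_crossingBeams :
    exchangeBeams ⁻¹' crossingBeams = crossingBeams := by
  ext p
  simp [crossingBeams]
  beta_reduce
  grind

theorem hasHalfSpaceChartAt_crossingBeams_of_edge {x : ℝ³} (h₀ : x 0 = 1) (h₁ : |x 1| < 1)
    (h₂ : x 2 = 0) : HasHalfSpaceChartAt crossingBeams x := by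
  refine (HasHalfSpaceChartAt.reentrant.preimage (addRight (-x)) (by simp)).congr
    (eventuallyEq_set.mpr ?_)
  filter_upwards [eventually_abs_coord_sub_lt x 0 one_pos, eventually_abs_coord_sub_lt x 2 one_pos,
    eventually_abs_coord_lt h₁] with p hp₀ hp₂ hp₁
  simp [crossingBeams, abs_lt, h₀, h₂] at hp₀ hp₁ hp₂ ⊢
  beta_reduce at *
  grind

theorem hasHalfSpaceChartAt_crossingBeams_of_corner {x : ℝ³} (h₀ : x 0 = 1) (h₁ : x 1 = 1)
    (h₂ : x 2 = 0) : HasHalfSpaceChartAt crossingBeams x := by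
  refine (HasHalfSpaceChartAt.crossing.preimage (addRight (-x)) (by simp)).congr
    (eventuallyEq_set.mpr ?_)
  filter_upwards [eventually_abs_coord_sub_lt x 0 one_pos, eventually_abs_coord_sub_lt x 1 one_pos,
    eventually_abs_coord_sub_lt x 2 one_pos] with p hp₀ hp₁ hp₂
  simp [crossingBeams, abs_sub_lt_iff, h₀, h₁, h₂] at hp₀ hp₁ hp₂ ⊢
  beta_reduce at *
  grind

theorem hasHalfSpaceChartAt_crossingBeams_of_eq_one {x : ℝ³} (h₀ : x 0 = 1) (h₁ : |x 1| ≤ 1)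
    (h₂ : x 2 = 0) : HasHalfSpaceChartAt crossingBeams x := by
  rcases h₁.lt_or_eq with h₁ | h₁
  · exact hasHalfSpaceChartAt_crossingBeams_of_edge h₀ h₁ h₂
  rcases (abs_eq zero_le_one).mp h₁ with h₁ | h₁
  · exact hasHalfSpaceChartAt_crossingBeams_of_corner h₀ h₁ h₂
  · exact .of_symmetry _ (reflect_preimage_crossingBeams (i := 1) (by decide))
      (hasHalfSpaceChartAt_crossingBeams_of_corner (by simp [h₀]) (by simp [h₁]) (by simp [h₂]))

theorem hasHalfSpaceChartAt_crossingBeams_of_abs_eq_one {x : ℝ³} (h₀ : |x 0| = 1)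
    (h₁ : |x 1| ≤ 1) (h₂ : x 2 = 0) : HasHalfSpaceChartAt crossingBeams x := by
  rcases (abs_eq zero_le_one).mp h₀ with h₀ | h₀
  · exact hasHalfSpaceChartAt_crossingBeams_of_eq_one h₀ h₁ h₂
  · exact .of_symmetry _ (reflect_preimage_crossingBeams (i := 0) (by decide))
      (hasHalfSpaceChartAt_crossingBeams_of_eq_one (by simp [h₀]) (by simpa using h₁)
        (by simp [h₂]))

theorem hasHalfSpaceChartAt_crossingBeams_of_square {x : ℝ³} (hx : x ∉ crossingBeams)
    (h₀ : |x 0| ≤ 1) (h₁ : |x 1| ≤ 1) (h₂ : x 2 = 0) : HasHalfSpaceChartAt crossingBeams x := by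
  have h₀₁ : |x 0| = 1 ∨ |x 1| = 1 := by
    by_contra! h
    refine hx (Or.inr ⟨?_, ?_, h₂⟩) <;> simp only [mem_Ioo, ← abs_lt]
    exacts [h₀.lt_of_ne h.1, h₁.lt_of_ne h.2]
  rcases h₀₁ with h₀ | h₁
  · exact hasHalfSpaceChartAt_crossingBeams_of_abs_eq_one h₀ h₁ h₂
  · exact .of_symmetry _ exchangeBeams_preimage_crossingBeams
      (hasHalfSpaceChartAt_crossingBeams_of_abs_eq_one (by simpa using h₁) (by simpa using h₀)
        (by simp [h₂]))

theorem hasHalfSpaceChartAt_crossingBeams {x : ℝ³} (hx : x ∈ frontier crossingBeams) :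
    HasHalfSpaceChartAt crossingBeams x := by
  have hxB : x ∉ crossingBeams := fun h => hx.2 (isOpen_crossingBeams.interior_eq.symm ▸ h)
  have hcl := closure_crossingBeams_subset hx.1
  simp only [closedBox, mem_union, mem_ofPred_eq, forall_fin_three] at hcl
  by_cases hL : x 2 < 0 ∨ 1 < |x 0|
  · refine (HasHalfSpaceChartAt.openBox (by simp [forall_fin_three]) ?_
      fun h => hxB (lowerBeam_subset_crossingBeams h)).congr
      (crossingBeams_eventuallyEq_lowerBeam hL)
    simp only [forall_fin_three]
    simp [lt_abs] at hL hcl ⊢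
    grind
  by_cases hU : 0 < x 2 ∨ 1 < |x 1|
  · refine (HasHalfSpaceChartAt.openBox (by simp [forall_fin_three]) ?_
      fun h => hxB (upperBeam_subset_crossingBeams h)).congr
      (crossingBeams_eventuallyEq_upperBeam hU)
    simp only [forall_fin_three]
    simp [lt_abs] at hU hcl ⊢
    grind
  simp only [not_or, not_lt] at hL hU
  exact hasHalfSpaceChartAt_crossingBeams_of_square hxB hL.2 hU.2 (le_antisymm hU.1 hL.1)

/-- the set `B_⋈` of two crossing beams is regular in the sense of Gröger
with volume-preserving charts: around every boundary point `x` there is an open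
neighborhood `Υ` and a volume-preserving bi-Lipschitz chart `φ` with `φ x = 0` mapping
`B_⋈ ∩ Υ` onto `α K_-` for some `α > 0`. -/
theorem crossingBeams_groeger_regular :
    ∀ x ∈ frontier crossingBeams,
      ∃ (Υ : Set (EuclideanSpace ℝ (Fin 3)))
        (φ : EuclideanSpace ℝ (Fin 3) → EuclideanSpace ℝ (Fin 3)) (K : NNReal) (α : ℝ),
        0 < α ∧ IsOpen Υ ∧ x ∈ Υ ∧
        LipschitzOnWith K φ Υ ∧ AntilipschitzWith K (Υ.restrict φ) ∧
        φ x = 0 ∧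
        (∀ s : Set (EuclideanSpace ℝ (Fin 3)), s ⊆ Υ → MeasurableSet s →
          volume (φ '' s) = volume s) ∧
        φ '' (crossingBeams ∩ Υ) = α • lowerHalfUnitCube :=
  fun _ hx => (hasHalfSpaceChartAt_crossingBeams hx).exists_groeger_chart
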